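/- arXiv:1805.03412 — 5 statements merged into one kernel-verified Lean document; each statement's English description precedes it below -/
import Mathlib

section
/- Let T_n be a strongly connected arc-colored tournament of order n with Δ^{-mon}(T_n) ≤ Δ^{+mon}(T_n). Then for each vertex v of T_n, the number of rainbow triangles containing v is at least δ(v)·(n − δ(v) − i(T_n))/2 − [Δ^{-mon}(T_n)·(n−1) + Δ^{+mon}(T_n)·d^+(v)]. -/
/-!
Every directed triangle through `v` is rainbow or has two consecutive arcs of equal colour.

Triangles: with `A = N⁺(v)`, the sum `∑_{w ∈ A} d⁺(w)` counts every triangle `v → w → u → v` once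
and every arc inside `A` once, so `2 t(v) = 2 ∑_{w ∈ A} d⁺(w) − |A|(|A| − 1)`. Since
`2 d⁺(w) ≥ n − 1 − i(T)`, this gives `2 t(v) ≥ d⁺(v)(n − i(T) − d⁺(v))`; reversing every arc
gives the same bound with `d⁻(v)`, hence with `δ(v)`.

Non-rainbow triangles: classify by the vertex where the monochromatic pair of arcs meets. At `w`
the arc `w → u` has the colour of `v → w`, at most `Δ⁺` choices for each `w ∈ N⁺(v)`; at `v` the
arc `u → v` has the colour of `v → w`, at most `Δ⁻` choices for each `w ∈ N⁺(v)`; at `u` the arc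
`w → u` has the colour of `u → v`, at most `Δ⁻` choices for each `u ∈ N⁻(v)`. In total at most
`Δ⁺ d⁺(v) + Δ⁻ (d⁺(v) + d⁻(v)) = Δ⁺ d⁺(v) + Δ⁻ (n − 1)`.
-/

open Finset

/-- A tournament on vertex type `V`: between every two distinct vertices there is
exactly one arc, and there are no loops. -/
structure Tournament (V : Type) where
  arc : V → V → Bool
  irrefl : ∀ v, arc v v = false
  oneArc : ∀ u v : V, u ≠ v → arc u v = !arc v u

namespace Tournament

variable {V : Type} [Fintype V]

/-- Outdegree `d⁺(v)`. -/
def outDeg (T : Tournament V) (v : V) : ℕ :=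
  (univ.filter fun w => T.arc v w).card

/-- Indegree `d⁻(v)`. -/
def inDeg (T : Tournament V) (v : V) : ℕ :=
  (univ.filter fun u => T.arc u v).card

/-- `δ(v) = min{d⁺(v), d⁻(v)}`. -/
def minDeg (T : Tournament V) (v : V) : ℕ :=
  min (T.outDeg v) (T.inDeg v)

/-- The irregularity `i(T)`: the maximum of `|d⁺(v) − d⁻(v)|` over all vertices. -/
def irreg (T : Tournament V) : ℕ :=
  univ.sup fun v => ((T.outDeg v : ℤ) - (T.inDeg v : ℤ)).natAbs

/-- Strong connectivity: every vertex can reach every other vertex by a directed path. -/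
def StronglyConnected (T : Tournament V) : Prop :=
  ∀ u v : V, Relation.ReflTransGen (fun a b => T.arc a b) u v

/-- The number of in-arcs of `v` with color `c`. -/
def monoInDeg (T : Tournament V) (C : V → V → ℕ) (v : V) (c : ℕ) : ℕ :=
  (univ.filter fun u => T.arc u v ∧ C u v = c).card

/-- The number of out-arcs of `v` with color `c`. -/
def monoOutDeg (T : Tournament V) (C : V → V → ℕ) (v : V) (c : ℕ) : ℕ :=
  (univ.filter fun w => T.arc v w ∧ C v w = c).card

/-- The maximum monochromatic indegree `Δ^{-mon}(T)`. -/
def maxMonoIn (T : Tournament V) (C : V → V → ℕ) : ℕ :=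
  univ.sup fun v => (univ.image fun u => C u v).sup (T.monoInDeg C v)

/-- The maximum monochromatic outdegree `Δ^{+mon}(T)`. -/
def maxMonoOut (T : Tournament V) (C : V → V → ℕ) : ℕ :=
  univ.sup fun v => (univ.image fun w => C v w).sup (T.monoOutDeg C v)

/-- The directed triangles through `v`, encoded as ordered pairs `(w, u)` with
arcs `v → w → u → v`.  This gives each triangle through `v` exactly once. -/
def trianglesThrough (T : Tournament V) (v : V) : Finset (V × V) :=
  univ.filter fun p => T.arc v p.1 ∧ T.arc p.1 p.2 ∧ T.arc p.2 v

/-- The rainbow triangles through `v`: all three arcs have pairwise distinct colors. -/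
def rainbowTrianglesThrough (T : Tournament V) (C : V → V → ℕ) (v : V) : Finset (V × V) :=
  (T.trianglesThrough v).filter fun p =>
    C v p.1 ≠ C p.1 p.2 ∧ C p.1 p.2 ≠ C p.2 v ∧ C p.2 v ≠ C v p.1

/-- The non-rainbow triangles through `v`: some two arcs share a color. -/
def nonRainbowTrianglesThrough (T : Tournament V) (C : V → V → ℕ) (v : V) : Finset (V × V) :=
  (T.trianglesThrough v).filter fun p =>
    ¬(C v p.1 ≠ C p.1 p.2 ∧ C p.1 p.2 ≠ C p.2 v ∧ C p.2 v ≠ C v p.1)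

/-- Ordered triples `(x, y, z)` with arcs `x → y → z → x`.  Each directed triangle
is counted exactly three times (once per cyclic rotation). -/
def triangleTriples (T : Tournament V) : Finset (V × V × V) :=
  univ.filter fun p => T.arc p.1 p.2.1 ∧ T.arc p.2.1 p.2.2 ∧ T.arc p.2.2 p.1

/-- Ordered triples representing rainbow triangles (each rainbow triangle thrice). -/
def rainbowTriples (T : Tournament V) (C : V → V → ℕ) : Finset (V × V × V) :=
  T.triangleTriples.filter fun p =>
    C p.1 p.2.1 ≠ C p.2.1 p.2.2 ∧ C p.2.1 p.2.2 ≠ C p.2.2 p.1 ∧ C p.2.2 p.1 ≠ C p.1 p.2.1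

/-- Ordered triples representing non-rainbow triangles (each such triangle thrice). -/
def nonRainbowTriples (T : Tournament V) (C : V → V → ℕ) : Finset (V × V × V) :=
  T.triangleTriples.filter fun p =>
    ¬(C p.1 p.2.1 ≠ C p.2.1 p.2.2 ∧ C p.2.1 p.2.2 ≠ C p.2.2 p.1 ∧ C p.2.2 p.1 ≠ C p.1 p.2.1)

end Tournament

lemma Finset.card_filter_product_le {α β : Type*} {s : Finset α} {t : Finset β}
    {r : α → β → Prop} [∀ a b, Decidable (r a b)] {m : ℕ}
    (h : ∀ a ∈ s, #(t.filter (r a)) ≤ m) :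
    #((s ×ˢ t).filter fun p => r p.1 p.2) ≤ #s * m := by
  calc #((s ×ˢ t).filter fun p => r p.1 p.2) = ∑ a ∈ s, #(t.filter (r a)) := by
        simp only [card_filter, sum_product]
    _ ≤ #s • m := sum_le_card_nsmul _ _ _ h
    _ = #s * m := smul_eq_mul _ _

lemma Finset.card_filter_product_le_right {α β : Type*} {s : Finset α} {t : Finset β}
    {r : α → β → Prop} [∀ a b, Decidable (r a b)] {m : ℕ}
    (h : ∀ b ∈ t, #(s.filter fun a => r a b) ≤ m) :
    #((s ×ˢ t).filter fun p => r p.1 p.2) ≤ #t * m := by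
  calc #((s ×ˢ t).filter fun p => r p.1 p.2) = ∑ b ∈ t, #(s.filter fun a => r a b) := by
        simp only [card_filter, sum_product_right]
    _ ≤ #t • m := sum_le_card_nsmul _ _ _ h
    _ = #t * m := smul_eq_mul _ _

namespace Tournament

variable {V : Type} (T : Tournament V)

lemma ne_of_arc {u v : V} (h : T.arc u v) : u ≠ v := by
  rintro rfl
  simp [T.irrefl] at h

lemma not_arc_of_arc {u v : V} (h : T.arc u v) : ¬ T.arc v u := by
  simpa [T.oneArc u v (T.ne_of_arc h)] using h

lemma arc_or_arc {u v : V} (h : u ≠ v) : T.arc u v ∨ T.arc v u := by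
  rw [T.oneArc u v h]
  cases T.arc v u <;> simp

def reverse : Tournament V where
  arc a b := T.arc b a
  irrefl := T.irrefl
  oneArc u v h := T.oneArc v u h.symm

lemma reverse_arc (u v : V) : T.reverse.arc u v = T.arc v u := rfl

def arcsWithin (A : Finset V) : Finset (V × V) := (A ×ˢ A).filter fun p => T.arc p.1 p.2

lemma card_arcsWithin_reverse (A : Finset V) :
    #(T.reverse.arcsWithin A) = #(T.arcsWithin A) := by
  refine card_equiv (Equiv.prodComm V V) fun p => ?_
  simp only [arcsWithin, mem_filter, mem_product, Equiv.prodComm_apply,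
    Prod.fst_swap, Prod.snd_swap]
  simp only [reverse_arc]
  tauto

lemma two_mul_card_arcsWithin_add_card (A : Finset V) :
    2 * #(T.arcsWithin A) + #A = #A * #A := by
  classical
  have hdisj : Disjoint (T.arcsWithin A) (T.reverse.arcsWithin A) :=
    disjoint_filter.2 fun _ _ h => T.not_arc_of_arc h
  have hunion : T.arcsWithin A ∪ T.reverse.arcsWithin A = A.offDiag := by
    ext ⟨a, b⟩
    simp only [arcsWithin, mem_union, mem_filter, mem_product, mem_offDiag]
    simp only [reverse_arc]
    constructor
    · rintro (⟨hab, h⟩ | ⟨hab, h⟩)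
      exacts [⟨hab.1, hab.2, T.ne_of_arc h⟩, ⟨hab.1, hab.2, (T.ne_of_arc h).symm⟩]
    · rintro ⟨ha, hb, hne⟩
      exact (T.arc_or_arc hne).imp (⟨⟨ha, hb⟩, ·⟩) (⟨⟨ha, hb⟩, ·⟩)
  have hcard := card_union_of_disjoint hdisj
  rw [hunion, offDiag_card, card_arcsWithin_reverse] at hcard
  have := Nat.le_mul_self #A
  omega

variable [Fintype V]

def outNbhd (v : V) : Finset V := univ.filter fun w => T.arc v w

def inNbhd (v : V) : Finset V := univ.filter fun u => T.arc u v

lemma card_outNbhd (v : V) : #(T.outNbhd v) = T.outDeg v := rfl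

lemma card_inNbhd (v : V) : #(T.inNbhd v) = T.inDeg v := rfl

lemma outDeg_add_inDeg (v : V) : T.outDeg v + T.inDeg v + 1 = Fintype.card V := by
  classical
  have hdisj : Disjoint (T.outNbhd v) (T.inNbhd v) :=
    disjoint_filter.2 fun _ _ h => T.not_arc_of_arc h
  have hunion : T.outNbhd v ∪ T.inNbhd v = univ.erase v := by
    ext w
    simp only [outNbhd, inNbhd, mem_union, mem_filter, mem_univ, true_and, mem_erase, and_true]
    exact ⟨fun h => h.elim (fun h => (T.ne_of_arc h).symm) T.ne_of_arc,
      fun h => T.arc_or_arc (Ne.symm h)⟩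
  have hcard := card_union_of_disjoint hdisj
  rw [hunion, card_erase_of_mem (mem_univ v), card_univ, card_outNbhd, card_inNbhd] at hcard
  have := Fintype.card_pos_iff.2 ⟨v⟩
  omega

lemma abs_outDeg_sub_inDeg_le_irreg (v : V) : |(T.outDeg v : ℤ) - T.inDeg v| ≤ T.irreg := by
  have h : _ ≤ T.irreg := le_sup (f := fun v => ((T.outDeg v : ℤ) - T.inDeg v).natAbs) (mem_univ v)
  rw [Int.abs_eq_natAbs]
  exact Int.ofNat_le.2 h

lemma card_sub_one_sub_irreg_le_two_mul_outDeg (v : V) :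
    (Fintype.card V : ℤ) - 1 - T.irreg ≤ 2 * T.outDeg v := by
  have := T.outDeg_add_inDeg v
  have := abs_le.1 (T.abs_outDeg_sub_inDeg_le_irreg v)
  omega

lemma outDeg_reverse (v : V) : T.reverse.outDeg v = T.inDeg v := rfl

lemma inDeg_reverse (v : V) : T.reverse.inDeg v = T.outDeg v := rfl

lemma irreg_reverse : T.reverse.irreg = T.irreg := by
  refine sup_congr rfl fun v _ => ?_
  rw [outDeg_reverse, inDeg_reverse, ← Int.natAbs_neg, neg_sub]

lemma card_trianglesThrough_reverse (v : V) :
    #(T.reverse.trianglesThrough v) = #(T.trianglesThrough v) := by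
  refine card_equiv (Equiv.prodComm V V) fun p => ?_
  simp only [trianglesThrough, mem_filter, mem_univ, true_and, Equiv.prodComm_apply,
    Prod.fst_swap, Prod.snd_swap]
  simp only [reverse_arc]
  tauto

lemma card_trianglesThrough (v : V) :
    #(T.trianglesThrough v) = ∑ w ∈ T.outNbhd v, #(univ.filter fun u => T.arc w u ∧ T.arc u v) := by
  have : T.trianglesThrough v =
      (T.outNbhd v ×ˢ univ).filter fun p => T.arc p.1 p.2 ∧ T.arc p.2 v := by
    ext p
    simp only [trianglesThrough, outNbhd, mem_filter, mem_univ, mem_product, true_and, and_true]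
  rw [this, card_filter, sum_product]
  simp only [card_filter]

lemma outDeg_eq_of_arc {v w : V} (hvw : T.arc v w) :
    T.outDeg w = #(univ.filter fun u => T.arc w u ∧ T.arc u v)
      + #((T.outNbhd v).filter fun u => T.arc w u) := by
  rw [← card_outNbhd, ← card_filter_add_card_filter_not (p := fun u => T.arc u v)]
  congr 1
  · simp only [outNbhd, filter_filter]
  · congr 1
    ext u
    simp only [outNbhd, mem_filter, mem_univ, true_and]
    constructor
    · rintro ⟨hwu, huv⟩
      have hne : u ≠ v := by rintro rfl; exact T.not_arc_of_arc hvw hwu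
      exact ⟨(T.arc_or_arc hne).resolve_left huv, hwu⟩
    · rintro ⟨hvu, hwu⟩
      exact ⟨hwu, T.not_arc_of_arc hvu⟩

lemma sum_outDeg_outNbhd (v : V) :
    ∑ w ∈ T.outNbhd v, T.outDeg w = #(T.trianglesThrough v) + #(T.arcsWithin (T.outNbhd v)) := by
  have harcs : #(T.arcsWithin (T.outNbhd v)) =
      ∑ w ∈ T.outNbhd v, #((T.outNbhd v).filter fun u => T.arc w u) := by
    simp only [arcsWithin, card_filter, sum_product]
  rw [card_trianglesThrough, harcs, ← sum_add_distrib]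
  refine sum_congr rfl fun w hw => T.outDeg_eq_of_arc ?_
  simpa [outNbhd] using hw

lemma outDeg_mul_le_two_mul_card_trianglesThrough (v : V) :
    (T.outDeg v : ℤ) * (Fintype.card V - T.irreg - T.outDeg v) ≤ 2 * #(T.trianglesThrough v) := by
  have hsum : (∑ w ∈ T.outNbhd v, (T.outDeg w : ℤ)) =
      #(T.trianglesThrough v) + #(T.arcsWithin (T.outNbhd v)) := by
    exact_mod_cast T.sum_outDeg_outNbhd v
  have harcs : 2 * (#(T.arcsWithin (T.outNbhd v)) : ℤ) + T.outDeg v = T.outDeg v * T.outDeg v := by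
    exact_mod_cast T.two_mul_card_arcsWithin_add_card (T.outNbhd v)
  have hdeg : (T.outDeg v : ℤ) * (Fintype.card V - 1 - T.irreg) ≤
      2 * ∑ w ∈ T.outNbhd v, (T.outDeg w : ℤ) := by
    rw [mul_sum, ← card_outNbhd, ← nsmul_eq_mul]
    exact card_nsmul_le_sum _ _ _ fun w _ => T.card_sub_one_sub_irreg_le_two_mul_outDeg w
  linarith

lemma minDeg_mul_le_two_mul_card_trianglesThrough (v : V) :
    (T.minDeg v : ℤ) * (Fintype.card V - T.minDeg v - T.irreg) ≤ 2 * #(T.trianglesThrough v) := by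
  rcases le_total (T.outDeg v) (T.inDeg v) with h | h
  · rw [minDeg, min_eq_left h]
    linarith [T.outDeg_mul_le_two_mul_card_trianglesThrough v]
  · have := T.reverse.outDeg_mul_le_two_mul_card_trianglesThrough v
    rw [outDeg_reverse, irreg_reverse, card_trianglesThrough_reverse] at this
    rw [minDeg, min_eq_right h]
    linarith

variable (C : V → V → ℕ)

lemma monoOutDeg_le_maxMonoOut (w : V) (c : ℕ) : T.monoOutDeg C w c ≤ T.maxMonoOut C := by
  by_cases hc : c ∈ univ.image fun u => C w u
  · exact (le_sup hc).trans
      (le_sup (f := fun w => (univ.image fun u => C w u).sup (T.monoOutDeg C w)) (mem_univ w))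
  · have : T.monoOutDeg C w c = 0 :=
      card_eq_zero.2 (filter_eq_empty_iff.2 fun u _ h => hc (mem_image.2 ⟨u, mem_univ u, h.2⟩))
    simp [this]

lemma monoInDeg_le_maxMonoIn (w : V) (c : ℕ) : T.monoInDeg C w c ≤ T.maxMonoIn C :=
  T.reverse.monoOutDeg_le_maxMonoOut (fun a b => C b a) w c

lemma card_nonRainbowTrianglesThrough_le (v : V) :
    #(T.nonRainbowTrianglesThrough C v) ≤
      T.outDeg v * T.maxMonoOut C + T.outDeg v * T.maxMonoIn C + T.inDeg v * T.maxMonoIn C := by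
  classical
  have hcover : T.nonRainbowTrianglesThrough C v ⊆
      ((T.outNbhd v ×ˢ univ).filter fun p => T.arc p.1 p.2 ∧ C p.1 p.2 = C v p.1) ∪
      ((T.outNbhd v ×ˢ univ).filter fun p => T.arc p.2 v ∧ C p.2 v = C v p.1) ∪
      ((univ ×ˢ T.inNbhd v).filter fun p => T.arc p.1 p.2 ∧ C p.1 p.2 = C p.2 v) := by
    rintro ⟨w, u⟩ hp
    simp only [nonRainbowTrianglesThrough, trianglesThrough, outNbhd, inNbhd, mem_filter,
      mem_union, mem_product, mem_univ, true_and, and_true] at hp ⊢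
    obtain ⟨⟨hvw, hwu, huv⟩, hcol⟩ := hp
    simp only [hvw, hwu, huv, true_and]
    omega
  refine (card_le_card hcover).trans <| (card_union_le _ _).trans <|
    add_le_add ((card_union_le _ _).trans (add_le_add ?_ ?_)) ?_
  · exact card_filter_product_le fun w _ => T.monoOutDeg_le_maxMonoOut C w (C v w)
  · exact card_filter_product_le fun w _ => T.monoInDeg_le_maxMonoIn C v (C v w)
  · exact card_filter_product_le_right fun u _ => T.monoInDeg_le_maxMonoIn C u (C u v)

end Tournament

theorem rainbow_triangles_through_vertex_lower_bound_general
    {V : Type} [Fintype V] (n : ℕ) (hn : Fintype.card V = n)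
    (T : Tournament V) (C : V → V → ℕ)
    (v : V) :
    ((T.rainbowTrianglesThrough C v).card : ℚ) ≥
      (T.minDeg v : ℚ) * ((n : ℚ) - (T.minDeg v : ℚ) - (T.irreg : ℚ)) / 2
        - ((T.maxMonoIn C : ℚ) * ((n : ℚ) - 1)
            + (T.maxMonoOut C : ℚ) * (T.outDeg v : ℚ)) := by
  subst hn
  have hsplit : (#(T.rainbowTrianglesThrough C v) : ℚ) + #(T.nonRainbowTrianglesThrough C v) =
      #(T.trianglesThrough v) := by
    exact_mod_cast card_filter_add_card_filter_not _
  have htri : (T.minDeg v : ℚ) * (Fintype.card V - T.minDeg v - T.irreg) ≤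
      2 * #(T.trianglesThrough v) := by
    exact_mod_cast T.minDeg_mul_le_two_mul_card_trianglesThrough v
  have hnon : (#(T.nonRainbowTrianglesThrough C v) : ℚ) ≤
      T.outDeg v * T.maxMonoOut C + T.outDeg v * T.maxMonoIn C + T.inDeg v * T.maxMonoIn C := by
    exact_mod_cast T.card_nonRainbowTrianglesThrough_le C v
  have hdeg : (Fintype.card V : ℚ) - 1 = T.outDeg v + T.inDeg v := by
    rw [← T.outDeg_add_inDeg v]
    push_cast
    ring
  rw [hdeg]
  linarith

/-- In a strongly connected arc-colored tournament of order `n` with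
`Δ^{-mon} ≤ Δ^{+mon}`, every vertex `v` lies on at least
`δ(v)(n − δ(v) − i(T))/2 − [Δ^{-mon}(n−1) + Δ^{+mon} d⁺(v)]` rainbow triangles. -/
theorem rainbow_triangles_through_vertex_lower_bound
    {V : Type} [Fintype V] (n : ℕ) (hn : Fintype.card V = n)
    (T : Tournament V) (C : V → V → ℕ)
    (hsc : T.StronglyConnected)
    (hmono : T.maxMonoIn C ≤ T.maxMonoOut C)
    (v : V) :
    ((T.rainbowTrianglesThrough C v).card : ℚ) ≥
      (T.minDeg v : ℚ) * ((n : ℚ) - (T.minDeg v : ℚ) - (T.irreg : ℚ)) / 2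
        - ((T.maxMonoIn C : ℚ) * ((n : ℚ) - 1)
            + (T.maxMonoOut C : ℚ) * (T.outDeg v : ℚ)) :=
  rainbow_triangles_through_vertex_lower_bound_general n hn T C v
end

section
/- Let T_n be a strongly connected tournament of odd order n and irregularity i(T_n). Then the total number of directed triangles in T_n is at least (n−1)·(n² + n − 3·i(T_n)²)/24. -/
open Finset

set_option linter.unusedSectionVars false

open Classical in
noncomputable def chi (P : Prop) : ℚ := if P then 1 else 0

lemma chi_pos {P : Prop} (h : P) : chi P = 1 := by simp [chi, h]
lemma chi_neg {P : Prop} (h : ¬P) : chi P = 0 := by simp [chi, h]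

lemma chi_nonneg (P : Prop) : 0 ≤ chi P := by
  by_cases h : P <;> simp [chi, h]

lemma card_filter_chi {α : Type*} (s : Finset α) (p : α → Prop) [DecidablePred p] :
    ((s.filter p).card : ℚ) = ∑ a ∈ s, chi (p a) := by
  rw [Finset.card_filter]
  push_cast
  exact Finset.sum_congr rfl fun a _ => by by_cases h : p a <;> simp [chi, h]

lemma sum_chi_eq {α : Type*} [Fintype α] (y : α) : ∑ z : α, chi (z = y) = 1 := by
  classical
  rw [Finset.sum_eq_single y (fun b _ hb => chi_neg hb) (by simp)]
  exact chi_pos rfl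


namespace Tournament

variable {V : Type} [Fintype V]

lemma partition_point (T : Tournament V) (x y z : V) :
    chi (T.arc x y ∧ T.arc y z ∧ T.arc z x)
      + chi (T.arc x z ∧ T.arc z y ∧ T.arc y x)
      + chi (T.arc x y ∧ T.arc x z ∧ y ≠ z)
      + chi (T.arc y x ∧ T.arc y z ∧ x ≠ z)
      + chi (T.arc z x ∧ T.arc z y ∧ x ≠ y)
    = chi (x ≠ y ∧ y ≠ z ∧ x ≠ z) := by
  by_cases hxy : x = y
  · subst hxy; simp [chi, T.irrefl]
  by_cases hyz : y = z
  · subst hyz; simp [chi, T.irrefl, hxy]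
  by_cases hxz : x = z
  · subst hxz; simp [chi, T.irrefl, hxy, hyz]
  have e1 := T.oneArc y x (Ne.symm hxy)
  have e2 := T.oneArc z y (Ne.symm hyz)
  have e3 := T.oneArc x z hxz
  rcases Bool.eq_false_or_eq_true (T.arc x y) with h1 | h1 <;>
    rcases Bool.eq_false_or_eq_true (T.arc y z) with h2 | h2 <;>
    rcases Bool.eq_false_or_eq_true (T.arc z x) with h3 | h3 <;>
    simp [chi, e1, e2, e3, h1, h2, h3, hxy, hyz, hxz]



lemma source_sum (T : Tournament V) (x : V) :
    ∑ y : V, ∑ z : V, chi (T.arc x y ∧ T.arc x z ∧ y ≠ z)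
      = (T.outDeg x : ℚ) ^ 2 - T.outDeg x := by
  have hd : ∑ y : V, chi (T.arc x y = true) = (T.outDeg x : ℚ) :=
    (card_filter_chi univ fun w => T.arc x w = true).symm
  have point : ∀ y z : V, chi (T.arc x y ∧ T.arc x z ∧ y ≠ z)
      = chi (T.arc x y = true) * chi (T.arc x z = true)
        - chi (T.arc x y = true) * chi (z = y) := by
    intro y z
    by_cases h : z = y
    · subst h
      by_cases ha : T.arc x z = true <;> simp [chi, ha]
    · by_cases ha : T.arc x y = true <;> by_cases hb : T.arc x z = true <;>
        simp [chi, ha, hb, h, Ne.symm h]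
  calc ∑ y : V, ∑ z : V, chi (T.arc x y ∧ T.arc x z ∧ y ≠ z)
      = ∑ y : V, (chi (T.arc x y = true) * ∑ z : V, chi (T.arc x z = true)
          - chi (T.arc x y = true)) := by
        refine Finset.sum_congr rfl fun y _ => ?_
        rw [Finset.sum_congr rfl fun z _ => point y z, Finset.sum_sub_distrib,
          ← Finset.mul_sum, ← Finset.mul_sum, sum_chi_eq y, mul_one]
    _ = (T.outDeg x : ℚ) ^ 2 - T.outDeg x := by
        rw [Finset.sum_sub_distrib, ← Finset.sum_mul, hd]
        ring

lemma cyc_sum (T : Tournament V) :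
    ∑ x : V, ∑ y : V, ∑ z : V, chi (T.arc x y ∧ T.arc y z ∧ T.arc z x)
      = (T.triangleTriples.card : ℚ) := by
  rw [triangleTriples, card_filter_chi, Fintype.sum_prod_type]
  refine Finset.sum_congr rfl fun x _ => ?_
  rw [Fintype.sum_prod_type]

lemma cyc'_sum (T : Tournament V) :
    ∑ x : V, ∑ y : V, ∑ z : V, chi (T.arc x z ∧ T.arc z y ∧ T.arc y x)
      = (T.triangleTriples.card : ℚ) := by
  rw [← cyc_sum T]
  exact Finset.sum_congr rfl fun x _ => Finset.sum_comm

lemma source_sum2 (T : Tournament V) :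
    ∑ x : V, ∑ y : V, ∑ z : V, chi (T.arc y x ∧ T.arc y z ∧ x ≠ z)
      = ∑ y : V, ((T.outDeg y : ℚ) ^ 2 - T.outDeg y) := by
  rw [Finset.sum_comm]
  exact Finset.sum_congr rfl fun y _ => source_sum T y

lemma source_sum3 (T : Tournament V) :
    ∑ x : V, ∑ y : V, ∑ z : V, chi (T.arc z x ∧ T.arc z y ∧ x ≠ y)
      = ∑ z : V, ((T.outDeg z : ℚ) ^ 2 - T.outDeg z) := by
  have : ∀ x : V, ∑ y : V, ∑ z : V, chi (T.arc z x ∧ T.arc z y ∧ x ≠ y)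
      = ∑ z : V, ∑ y : V, chi (T.arc z x ∧ T.arc z y ∧ x ≠ y) :=
    fun x => Finset.sum_comm
  rw [Finset.sum_congr rfl fun x _ => this x, Finset.sum_comm]
  exact Finset.sum_congr rfl fun z _ => source_sum T z

lemma distinct_sum :
    ∑ x : V, ∑ y : V, ∑ z : V, chi (x ≠ y ∧ y ≠ z ∧ x ≠ z)
      = (Fintype.card V : ℚ) * (Fintype.card V - 1) * (Fintype.card V - 2) := by
  set n : ℚ := (Fintype.card V : ℚ) with hn
  have hsum1 : ∀ (s : Finset V) , ∑ _z ∈ s, (1:ℚ) = s.card := by simp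
  have inner : ∀ x y : V, ∑ z : V, (1 - chi (z = y)) * (1 - chi (z = x))
      = n - 2 + chi (y = x) := by
    intro x y
    have point : ∀ z : V, (1 - chi (z = y)) * (1 - chi (z = x))
        = 1 - chi (z = y) - chi (z = x) + chi (y = x) * chi (z = y) := by
      intro z
      by_cases h1 : z = y <;> by_cases h2 : z = x <;> by_cases h3 : y = x <;>
        simp_all [chi] <;> ring
    rw [Finset.sum_congr rfl fun z _ => point z]
    rw [Finset.sum_add_distrib, Finset.sum_sub_distrib, Finset.sum_sub_distrib,
      sum_chi_eq, sum_chi_eq, ← Finset.mul_sum, sum_chi_eq, mul_one]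
    simp [hn, Finset.card_univ]
    ring
  have pointA : ∀ x y z : V, chi (x ≠ y ∧ y ≠ z ∧ x ≠ z)
      = (1 - chi (y = x)) * ((1 - chi (z = y)) * (1 - chi (z = x))) := by
    intro x y z
    by_cases h1 : y = x <;> by_cases h2 : z = y <;> by_cases h3 : z = x <;>
      simp_all [chi, eq_comm] <;> ring
  have midpoint : ∀ x y : V, (1 - chi (y = x)) * (n - 2 + chi (y = x))
      = (n - 2) * (1 - chi (y = x)) := by
    intro x y
    by_cases h : y = x <;> simp [chi, h] <;> ring
  have innersum : ∀ x : V, ∑ y : V, (n - 2) * (1 - chi (y = x)) = (n-2) * (n-1) := by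
    intro x
    rw [← Finset.mul_sum, Finset.sum_sub_distrib, sum_chi_eq, hsum1]
    simp [hn, Finset.card_univ]
  calc ∑ x : V, ∑ y : V, ∑ z : V, chi (x ≠ y ∧ y ≠ z ∧ x ≠ z)
      = ∑ x : V, ∑ y : V, (n - 2) * (1 - chi (y = x)) := by
        refine Finset.sum_congr rfl fun x _ => Finset.sum_congr rfl fun y _ => ?_
        rw [Finset.sum_congr rfl fun z _ => pointA x y z, ← Finset.mul_sum,
          inner x y, midpoint]
    _ = ∑ _x : V, (n-2)*(n-1) := Finset.sum_congr rfl fun x _ => innersum x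
    _ = n * (n - 1) * (n - 2) := by
        rw [Finset.sum_const, Finset.card_univ]
        push_cast [hn]
        ring

lemma deg_sum_point (T : Tournament V) (v : V) :
    (T.outDeg v : ℚ) + T.inDeg v = Fintype.card V - 1 := by
  rw [outDeg, inDeg, card_filter_chi, card_filter_chi, ← Finset.sum_add_distrib]
  have point : ∀ w : V, chi (T.arc v w = true) + chi (T.arc w v = true)
      = 1 - chi (w = v) := by
    intro w
    by_cases h : w = v
    · subst h; simp [chi, T.irrefl]
    · have e := T.oneArc w v h
      rcases Bool.eq_false_or_eq_true (T.arc v w) with h1 | h1 <;>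
        simp [chi, e, h1, h]
  rw [Finset.sum_congr rfl fun w _ => point w, Finset.sum_sub_distrib, sum_chi_eq]
  simp [Finset.card_univ]

lemma sum_out_eq (T : Tournament V) :
    ∑ v : V, (T.outDeg v : ℚ)
      = (Fintype.card V : ℚ) * (Fintype.card V - 1) / 2 := by
  have h1 : ∑ v : V, (T.outDeg v : ℚ) = ∑ v : V, (T.inDeg v : ℚ) := by
    have : ∀ v : V, (T.outDeg v : ℚ) = ∑ w : V, chi (T.arc v w = true) :=
      fun v => card_filter_chi univ _
    have h2 : ∀ v : V, (T.inDeg v : ℚ) = ∑ w : V, chi (T.arc w v = true) :=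
      fun v => card_filter_chi univ _
    rw [Finset.sum_congr rfl fun v _ => this v,
      Finset.sum_congr rfl fun v _ => h2 v]
    exact Finset.sum_comm
  have h3 : ∑ v : V, ((T.outDeg v : ℚ) + T.inDeg v)
      = (Fintype.card V : ℚ) * (Fintype.card V - 1) := by
    rw [Finset.sum_congr rfl fun v _ => deg_sum_point T v, Finset.sum_const,
      Finset.card_univ, nsmul_eq_mul]
  rw [Finset.sum_add_distrib, ← h1] at h3
  linarith

lemma abs_diff_le (T : Tournament V) (v : V) :
    |(T.outDeg v : ℚ) - T.inDeg v| ≤ T.irreg := by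
  have h : ((T.outDeg v : ℤ) - (T.inDeg v : ℤ)).natAbs ≤ T.irreg :=
    Finset.le_sup (f := fun v => ((T.outDeg v : ℤ) - (T.inDeg v : ℤ)).natAbs)
      (Finset.mem_univ v)
  have h2 : |(T.outDeg v : ℚ) - T.inDeg v|
      = (((T.outDeg v : ℤ) - (T.inDeg v : ℤ)).natAbs : ℚ) := by
    rw [Nat.cast_natAbs]
    push_cast
    ring_nf
  rw [h2]
  exact_mod_cast h

lemma var_bound {n : ℕ} (hcard : Fintype.card V = n) (hodd : Odd n)
    (e : V → ℚ) (m : ℚ) (hm : 0 ≤ m) (habs : ∀ v, |e v| ≤ m)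
    (hsum : ∑ v : V, e v = 0) :
    ∑ v : V, (e v) ^ 2 ≤ ((n : ℚ) - 1) * m ^ 2 := by
  classical
  set P : Finset V := univ.filter (fun v => 0 < e v) with hP
  set N : Finset V := univ.filter (fun v => e v < 0) with hN
  set s : ℚ := ∑ v ∈ P, e v with hs
  -- sum over complement of P
  have hsplit : s + ∑ v ∈ univ.filter (fun v => ¬ 0 < e v), e v = 0 := by
    rw [hs, Finset.sum_filter_add_sum_filter_not]; exact hsum
  have hnotP : ∑ v ∈ univ.filter (fun v => ¬ 0 < e v), e v = ∑ v ∈ N, e v := by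
    rw [hN]
    rw [← Finset.sum_filter_add_sum_filter_not (univ.filter (fun v => ¬ 0 < e v))
      (fun v => e v < 0)]
    have hz : ∑ v ∈ (univ.filter (fun v => ¬ 0 < e v)).filter (fun v => ¬ e v < 0), e v = 0 := by
      apply Finset.sum_eq_zero
      intro v hv
      simp only [Finset.mem_filter] at hv
      linarith [hv.1.2, hv.2]
    rw [hz, add_zero]
    congr 1
    ext v
    simp only [Finset.mem_filter, Finset.mem_univ, true_and]
    constructor
    · rintro ⟨h1, h2⟩; exact h2
    · intro h; exact ⟨by linarith, h⟩
  have hNs : ∑ v ∈ N, e v = -s := by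
    have := hsplit; rw [hnotP] at this; linarith
  -- bound s by both cards
  have hsP : s ≤ m * P.card := by
    calc s ≤ ∑ _v ∈ P, m := Finset.sum_le_sum fun v _ => le_trans (le_abs_self _) (habs v)
      _ = m * P.card := by rw [Finset.sum_const, nsmul_eq_mul]; ring
  have hsN : s ≤ m * N.card := by
    have : ∑ v ∈ N, (-e v) = s := by rw [Finset.sum_neg_distrib, hNs]; ring
    calc s = ∑ v ∈ N, (-e v) := this.symm
      _ ≤ ∑ _v ∈ N, m := Finset.sum_le_sum fun v _ =>
          le_trans (le_trans (neg_le_abs _) (le_of_eq rfl)) (habs v)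
      _ = m * N.card := by rw [Finset.sum_const, nsmul_eq_mul]; ring
  -- sum of squares ≤ 2 m s
  have habs_sum : ∑ v : V, |e v| = 2 * s := by
    rw [← Finset.sum_filter_add_sum_filter_not univ (fun v => 0 < e v) (fun v => |e v|)]
    have h1 : ∑ v ∈ P, |e v| = s := by
      rw [hs]; exact Finset.sum_congr rfl fun v hv => by
        simp only [hP, Finset.mem_filter] at hv; exact abs_of_pos hv.2
    have h2 : ∑ v ∈ univ.filter (fun v => ¬ 0 < e v), |e v|
        = - ∑ v ∈ univ.filter (fun v => ¬ 0 < e v), e v := by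
      rw [← Finset.sum_neg_distrib]
      exact Finset.sum_congr rfl fun v hv => by
        simp only [Finset.mem_filter] at hv
        exact abs_of_nonpos (by linarith [hv.2])
    rw [h1, h2, hnotP, hNs]; ring
  have hsq : ∑ v : V, (e v) ^ 2 ≤ m * (2 * s) := by
    calc ∑ v : V, (e v) ^ 2 ≤ ∑ v : V, m * |e v| := by
          apply Finset.sum_le_sum
          intro v _
          have := habs v
          have h0 : 0 ≤ |e v| := abs_nonneg _
          nlinarith [sq_abs (e v)]
      _ = m * (2 * s) := by rw [← Finset.mul_sum, habs_sum]
  -- cardinality bound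
  have hdisj : Disjoint P N := by
    rw [Finset.disjoint_left]
    intro v hv1 hv2
    simp only [hP, hN, Finset.mem_filter] at hv1 hv2
    linarith [hv1.2, hv2.2]
  have hcards : P.card + N.card ≤ n := by
    rw [← Finset.card_union_of_disjoint hdisj, ← hcard, ← Finset.card_univ]
    exact Finset.card_le_card (Finset.subset_univ _)
  have hminN : 2 * min P.card N.card ≤ n - 1 := by
    have h1 : 2 * min P.card N.card ≤ n := by
      have := min_le_left P.card N.card
      have := min_le_right P.card N.card
      omega
    have h2 : 2 * min P.card N.card ≠ n := by
      intro h
      exact (Nat.not_odd_iff_even.mpr ⟨min P.card N.card, by omega⟩) (h ▸ hodd)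
    omega
  have hn1 : 1 ≤ n := hodd.pos
  set k : ℕ := min P.card N.card with hk
  have hminQ : 2 * (k : ℚ) ≤ (n : ℚ) - 1 := by
    have h2 : ((2 * k : ℕ) : ℚ) ≤ ((n - 1 : ℕ) : ℚ) := Nat.cast_le.mpr hminN
    rw [Nat.cast_sub hn1] at h2
    push_cast at h2
    linarith
  have hsmin : s ≤ m * (k : ℚ) := by
    rcases min_cases P.card N.card with ⟨h, _⟩ | ⟨h, _⟩
    · rw [hk, h]; exact hsP
    · rw [hk, h]; exact hsN
  have hs0 : 0 ≤ s := by
    rw [hs]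
    apply Finset.sum_nonneg
    intro v hv
    simp only [hP, Finset.mem_filter] at hv
    linarith [hv.2]
  have hk0 : (0:ℚ) ≤ (k:ℚ) := by positivity
  calc ∑ v : V, (e v) ^ 2 ≤ m * (2 * s) := hsq
    _ ≤ m * (m * (2 * (k:ℚ))) := by nlinarith
    _ ≤ ((n:ℚ) - 1) * m ^ 2 := by nlinarith [sq_nonneg m]


theorem main_bound
    (n : ℕ) (hn : Fintype.card V = n) (hodd : Odd n)
    (T : Tournament V) :
    (T.triangleTriples.card : ℚ) / 3 ≥
      ((n : ℚ) - 1) * ((n : ℚ) ^ 2 + (n : ℚ) - 3 * (T.irreg : ℚ) ^ 2) / 24 := by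
  classical
  set A : ℚ := (T.triangleTriples.card : ℚ) with hA
  set Sq : ℚ := ∑ v : V, (T.outDeg v : ℚ) ^ 2 with hSq
  set Sd : ℚ := ∑ v : V, (T.outDeg v : ℚ) with hSd
  set i : ℚ := (T.irreg : ℚ) with hi
  have hnQ : ((Fintype.card V : ℕ) : ℚ) = (n : ℚ) := by rw [hn]
  -- master counting identity
  have hmaster : A + A + (Sq - Sd) + (Sq - Sd) + (Sq - Sd)
      = (n : ℚ) * ((n:ℚ) - 1) * ((n:ℚ) - 2) := by
    have h : (∑ x : V, ∑ y : V, ∑ z : V,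
        (chi (T.arc x y ∧ T.arc y z ∧ T.arc z x)
          + chi (T.arc x z ∧ T.arc z y ∧ T.arc y x)
          + chi (T.arc x y ∧ T.arc x z ∧ y ≠ z)
          + chi (T.arc y x ∧ T.arc y z ∧ x ≠ z)
          + chi (T.arc z x ∧ T.arc z y ∧ x ≠ y)))
        = ∑ x : V, ∑ y : V, ∑ z : V, chi (x ≠ y ∧ y ≠ z ∧ x ≠ z) :=
      Finset.sum_congr rfl fun x _ => Finset.sum_congr rfl fun y _ =>
        Finset.sum_congr rfl fun z _ => T.partition_point x y z
    simp only [Finset.sum_add_distrib] at h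
    rw [cyc_sum T, cyc'_sum T] at h
    rw [Finset.sum_congr rfl (fun x (_ : x ∈ univ) => source_sum T x)] at h
    rw [source_sum2 T, source_sum3 T, distinct_sum] at h
    rw [hnQ] at h
    have hsplit : ∑ v : V, ((T.outDeg v : ℚ) ^ 2 - T.outDeg v) = Sq - Sd := by
      rw [Finset.sum_sub_distrib, hSq, hSd]
    rw [hsplit] at h
    exact h
  -- sum of outdegrees
  have hSdval : Sd = (n : ℚ) * ((n:ℚ) - 1) / 2 := by
    rw [hSd, sum_out_eq T, hnQ]
  -- variance bound
  have hSqbound : Sq ≤ (((n:ℚ) - 1) * i ^ 2 + (n:ℚ) * ((n:ℚ)-1)^2) / 4 := by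
    set e : V → ℚ := fun v => 2 * (T.outDeg v : ℚ) - ((n:ℚ) - 1) with he
    have habs : ∀ v, |e v| ≤ i := by
      intro v
      have h1 := deg_sum_point T v
      rw [hnQ] at h1
      have h2 : e v = (T.outDeg v : ℚ) - T.inDeg v := by rw [he]; simp; linarith
      rw [h2]
      exact abs_diff_le T v
    have hsum : ∑ v : V, e v = 0 := by
      have h1 : ∑ v : V, e v = 2 * Sd - (Fintype.card V : ℚ) * ((n:ℚ) - 1) := by
        rw [he, hSd]
        rw [Finset.sum_sub_distrib, ← Finset.mul_sum, Finset.sum_const,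
          Finset.card_univ, nsmul_eq_mul]
      rw [h1, hnQ, hSdval]
      ring
    have hi0 : (0:ℚ) ≤ i := by rw [hi]; positivity
    have hvar := var_bound hn hodd e i hi0 habs hsum
    have hexp : ∑ v : V, (e v) ^ 2
        = 4 * Sq - 4 * ((n:ℚ) - 1) * Sd + (n:ℚ) * ((n:ℚ)-1)^2 := by
      have point : ∀ v : V, (e v) ^ 2
          = 4 * (T.outDeg v : ℚ)^2 - 4*((n:ℚ)-1) * (T.outDeg v : ℚ) + ((n:ℚ)-1)^2 := by
        intro v; rw [he]; ring
      rw [Finset.sum_congr rfl fun v _ => point v]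
      rw [Finset.sum_add_distrib, Finset.sum_sub_distrib, ← Finset.mul_sum,
        ← Finset.mul_sum, ← hSq, ← hSd, Finset.sum_const, Finset.card_univ,
        nsmul_eq_mul, hnQ]
    rw [hexp] at hvar
    rw [hSdval] at hvar
    nlinarith [hvar]
  rw [ge_iff_le, div_le_div_iff₀ (by norm_num) (by norm_num)]
  nlinarith [hmaster, hSdval, hSqbound]

end Tournament


/-- Lemma 3, odd case: A strongly connected tournament of odd order `n`
has at least `(n−1)(n² + n − 3 i(T)²)/24` directed triangles.  Here
`T.triangleTriples.card / 3` is the number of directed triangles, since each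
triangle is represented by its three cyclic rotations. -/
theorem count_triangles_lower_bound_odd
    {V : Type} [Fintype V] (n : ℕ) (hn : Fintype.card V = n) (hodd : Odd n)
    (T : Tournament V)
    (hsc : T.StronglyConnected) :
    (T.triangleTriples.card : ℚ) / 3 ≥
      ((n : ℚ) - 1) * ((n : ℚ) ^ 2 + (n : ℚ) - 3 * (T.irreg : ℚ) ^ 2) / 24 := by
  classical
  exact Tournament.main_bound n hn hodd T
end

section
/- Let T_n be a strongly connected tournament of even order n and irregularity i(T_n). Then the total number of directed triangles in T_n is at least n·(n² − 1 − 3·i(T_n)²)/24. -/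
open Finset

namespace Tournament

variable {V : Type} [Fintype V]

/-- Rational indicator of an arc. -/
def aQ (T : Tournament V) (x y : V) : ℚ := if T.arc x y then 1 else 0

lemma aQ_self (T : Tournament V) (v : V) : T.aQ v v = 0 := by
  simp [aQ, T.irrefl v]

lemma aQ_mul_rev (T : Tournament V) (x y : V) : T.aQ x y * T.aQ y x = 0 := by
  by_cases h : x = y
  · subst h; simp [aQ_self]
  · have := T.oneArc x y h
    rcases Bool.eq_false_or_eq_true (T.arc x y) with h1 | h1 <;>
      simp [aQ, h1, this] at * <;> simp [aQ, h1, this]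

lemma aQ_add_rev (T : Tournament V) {x y : V} (h : x ≠ y) :
    T.aQ x y + T.aQ y x = 1 := by
  have := T.oneArc x y h
  rcases Bool.eq_false_or_eq_true (T.arc x y) with h1 | h1 <;>
    rw [h1] at this <;> simp [aQ, h1, this]

lemma aQ_idem (T : Tournament V) (x y : V) : T.aQ x y * T.aQ x y = T.aQ x y := by
  by_cases h : T.arc x y <;> simp [aQ, h]

lemma outDeg_eq_sum (T : Tournament V) (v : V) :
    (T.outDeg v : ℚ) = ∑ w, T.aQ v w := by
  rw [outDeg, Finset.card_filter]
  push_cast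
  exact Finset.sum_congr rfl fun w _ => by by_cases h : T.arc v w <;> simp [aQ, h]

lemma inDeg_eq_sum (T : Tournament V) (v : V) :
    (T.inDeg v : ℚ) = ∑ u, T.aQ u v := by
  rw [inDeg, Finset.card_filter]
  push_cast
  exact Finset.sum_congr rfl fun w _ => by by_cases h : T.arc w v <;> simp [aQ, h]

lemma tri_card_eq_sum (T : Tournament V) :
    (T.triangleTriples.card : ℚ) =
      ∑ x, ∑ y, ∑ z, T.aQ x y * T.aQ y z * T.aQ z x := by
  rw [triangleTriples, Finset.card_filter]
  push_cast
  rw [Fintype.sum_prod_type]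
  refine Finset.sum_congr rfl fun x _ => ?_
  rw [Fintype.sum_prod_type]
  refine Finset.sum_congr rfl fun y _ => Finset.sum_congr rfl fun z _ => ?_
  by_cases h1 : T.arc x y <;> by_cases h2 : T.arc y z <;> by_cases h3 : T.arc z x <;>
    simp [aQ, h1, h2, h3]

end Tournament

/-- Lemma 3, even case: A strongly connected tournament of even order `n`
has at least `n(n² − 1 − 3 i(T)²)/24` directed triangles.  Here
`T.triangleTriples.card / 3` is the number of directed triangles, since each
triangle is represented by its three cyclic rotations. -/
theorem count_triangles_lower_bound_even
    {V : Type} [Fintype V] (n : ℕ) (hn : Fintype.card V = n) (heven : Even n)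
    (T : Tournament V)
    (hsc : T.StronglyConnected) :
    (T.triangleTriples.card : ℚ) / 3 ≥
      (n : ℚ) * ((n : ℚ) ^ 2 - 1 - 3 * (T.irreg : ℚ) ^ 2) / 24 := by
  classical
  set a : V → V → ℚ := T.aQ with ha
  have haself : ∀ v : V, a v v = 0 := T.aQ_self
  have hamul : ∀ x y : V, a x y * a y x = 0 := T.aQ_mul_rev
  have haadd : ∀ x y : V, x ≠ y → a x y + a y x = 1 := fun x y h => T.aQ_add_rev h
  have haidem : ∀ x y : V, a x y * a x y = a x y := T.aQ_idem
  set D : V → ℚ := fun x => ∑ y, a x y with hD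
  set I : V → ℚ := fun x => ∑ u, a u x with hI
  -- pointwise identity A
  have hptA : ∀ x y z : V, a x y * a y z =
      a x y * a y z * a z x + a x y * a y z * a x z := by
    intro x y z
    by_cases h : x = z
    · subst h
      have h1 := hamul x y
      have h2 := haself x
      linear_combination (1 - 2 * a x x) * h1
    · have h1 := haadd z x (fun hh => h hh.symm)
      linear_combination (-(a x y * a y z)) * h1
  -- pointwise identity B
  have hptB : ∀ x y z : V, a x y * a x z =
      a x y * a x z * a y z + a x y * a x z * a z y
        + (if y = z then a x y else 0) := by
    intro x y z
    by_cases h : y = z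
    · subst h
      rw [if_pos rfl, haidem x y, haself y]
      ring
    · rw [if_neg h]
      have h1 := haadd y z h
      linear_combination (-(a x y * a x z)) * h1
  set C : ℚ := ∑ x, ∑ y, ∑ z, a x y * a y z * a z x with hC
  set T2 : ℚ := ∑ x, ∑ y, ∑ z, a x y * a y z * a x z with hT2
  -- identity A summed
  have hA : ∑ y, I y * D y = C + T2 := by
    have h1 : ∑ x, ∑ y, ∑ z, a x y * a y z = ∑ y, I y * D y := by
      rw [Finset.sum_comm]
      refine Finset.sum_congr rfl fun y _ => ?_
      rw [hI, hD, ← Finset.sum_mul_sum]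
    have h2 : ∑ x, ∑ y, ∑ z, a x y * a y z
        = (∑ x, ∑ y, ∑ z, a x y * a y z * a z x)
          + ∑ x, ∑ y, ∑ z, a x y * a y z * a x z := by
      rw [← Finset.sum_add_distrib]
      refine Finset.sum_congr rfl fun x _ => ?_
      rw [← Finset.sum_add_distrib]
      refine Finset.sum_congr rfl fun y _ => ?_
      rw [← Finset.sum_add_distrib]
      exact Finset.sum_congr rfl fun z _ => hptA x y z
    rw [← h1, h2, hC, hT2]
  -- identity B summed
  have hB : ∑ x, (D x)^2 = 2 * T2 + ∑ x, D x := by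
    have hTb : ∀ x : V, ∑ y, ∑ z, a x y * a x z * a z y
        = ∑ y, ∑ z, a x y * a y z * a x z := by
      intro x
      rw [Finset.sum_comm]
      exact Finset.sum_congr rfl fun y _ => Finset.sum_congr rfl fun z _ => by ring
    have h1 : ∑ x, ∑ y, ∑ z, a x y * a x z = ∑ x, (D x)^2 := by
      refine Finset.sum_congr rfl fun x _ => ?_
      rw [hD, sq, ← Finset.sum_mul_sum]
    have h2 : ∀ x : V, ∑ y, ∑ z, a x y * a x z =
        (∑ y, ∑ z, a x y * a x z * a y z) + (∑ y, ∑ z, a x y * a x z * a z y)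
          + D x := by
      intro x
      have h3 : ∑ y, ∑ z, (if y = z then a x y else (0:ℚ)) = D x := by
        rw [hD]
        exact Finset.sum_congr rfl fun y _ => by simp
      rw [← h3, ← Finset.sum_add_distrib, ← Finset.sum_add_distrib]
      refine Finset.sum_congr rfl fun y _ => ?_
      rw [← Finset.sum_add_distrib, ← Finset.sum_add_distrib]
      exact Finset.sum_congr rfl fun z _ => hptB x y z
    have h4 : ∀ x : V, ∑ y, ∑ z, a x y * a x z * a y z
        = ∑ y, ∑ z, a x y * a y z * a x z :=
      fun x => Finset.sum_congr rfl fun y _ => Finset.sum_congr rfl fun z _ => by ring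
    calc ∑ x, (D x)^2 = ∑ x, ∑ y, ∑ z, a x y * a x z := h1.symm
      _ = ∑ x, ((∑ y, ∑ z, a x y * a y z * a x z)
            + (∑ y, ∑ z, a x y * a y z * a x z) + D x) := by
          refine Finset.sum_congr rfl fun x _ => ?_
          rw [h2 x, h4 x, hTb x]
      _ = 2 * T2 + ∑ x, D x := by
          rw [Finset.sum_add_distrib, Finset.sum_add_distrib, hT2, two_mul]
  -- in/out relation
  have hIO : ∀ v : V, I v = (n : ℚ) - 1 - D v := by
    intro v
    have h1 : ∑ x, (a x v + a v x) = (n : ℚ) - 1 := by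
      have hpt : ∀ x : V, a x v + a v x = 1 - (if x = v then 1 else 0) := by
        intro x
        by_cases h : x = v
        · subst h; rw [if_pos rfl, haself x]; ring
        · rw [if_neg h, haadd x v h]; ring
      rw [Finset.sum_congr rfl fun x _ => hpt x, Finset.sum_sub_distrib,
        Finset.sum_const, Finset.card_univ, hn,
        Finset.sum_ite_eq' univ v (fun _ => (1:ℚ)), if_pos (Finset.mem_univ v),
        nsmul_eq_mul, mul_one]
    have h2 : I v + D v = (n : ℚ) - 1 := by
      rw [hI, hD, ← Finset.sum_add_distrib]
      exact h1
    linarith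
  have hS1 : ∑ x, D x = ∑ x, I x := by
    rw [hD, hI]; exact Finset.sum_comm
  have hS1v : ∑ x, D x = (n : ℚ) * ((n : ℚ) - 1) / 2 := by
    have h2 : ∑ x, I x = ∑ x, ((n : ℚ) - 1 - D x) :=
      Finset.sum_congr rfl fun x _ => hIO x
    rw [Finset.sum_sub_distrib, Finset.sum_const, Finset.card_univ, hn,
      nsmul_eq_mul] at h2
    rw [h2] at hS1
    linarith
  -- irregularity bound
  have hE : ∀ v : V, (2 * D v - ((n:ℚ) - 1))^2 ≤ (T.irreg : ℚ)^2 := by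
    intro v
    have h1 : ((T.outDeg v : ℤ) - (T.inDeg v : ℤ)).natAbs ≤ T.irreg :=
      Finset.le_sup (f := fun v => ((T.outDeg v : ℤ) - (T.inDeg v : ℤ)).natAbs)
        (Finset.mem_univ v)
    have h2 : |(T.outDeg v : ℚ) - (T.inDeg v : ℚ)| ≤ (T.irreg : ℚ) := by
      have h1' : ((((T.outDeg v : ℤ) - (T.inDeg v : ℤ)).natAbs : ℕ) : ℚ)
          ≤ (T.irreg : ℚ) := by exact_mod_cast h1
      rw [Nat.cast_natAbs] at h1'
      push_cast at h1'
      exact h1'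
    have h3 : 2 * D v - ((n:ℚ) - 1) = (T.outDeg v : ℚ) - (T.inDeg v : ℚ) := by
      have ho : D v = (T.outDeg v : ℚ) := by rw [hD, T.outDeg_eq_sum v]
      have hi : I v = (T.inDeg v : ℚ) := by rw [hI, T.inDeg_eq_sum v]
      have hio := hIO v
      rw [ho, hi] at hio
      linarith [hio, ho]
    rw [h3]
    rcases abs_le.mp h2 with ⟨hl, hr⟩
    nlinarith
  have hEsum : ∑ v, (2 * D v - ((n:ℚ) - 1))^2 ≤ (n : ℚ) * (T.irreg : ℚ)^2 := by
    calc ∑ v, (2 * D v - ((n:ℚ) - 1))^2 ≤ ∑ _v : V, (T.irreg : ℚ)^2 :=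
          Finset.sum_le_sum fun v _ => hE v
      _ = (n : ℚ) * (T.irreg : ℚ)^2 := by
          rw [Finset.sum_const, Finset.card_univ, hn, nsmul_eq_mul]
  have hexp : ∑ v, (2 * D v - ((n:ℚ) - 1))^2
      = 4 * (∑ x, (D x)^2) - 4 * ((n:ℚ)-1) * (∑ x, D x) + (n:ℚ) * ((n:ℚ)-1)^2 := by
    have h1 : ∀ v : V, (2 * D v - ((n:ℚ) - 1))^2
        = 4 * (D v)^2 - 4 * ((n:ℚ)-1) * D v + ((n:ℚ)-1)^2 := fun v => by ring
    rw [Finset.sum_congr rfl fun v _ => h1 v]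
    rw [Finset.sum_add_distrib, Finset.sum_sub_distrib, ← Finset.mul_sum,
      ← Finset.mul_sum, Finset.sum_const, Finset.card_univ, hn, nsmul_eq_mul,
      mul_comm ((n:ℚ)) (((n:ℚ)-1)^2)]
  -- triangle count formula
  have hcard : (T.triangleTriples.card : ℚ) = C := by
    rw [T.tri_card_eq_sum, hC]
  have hID : ∑ y, I y * D y
      = ((n:ℚ) - 1) * (∑ x, D x) - ∑ x, (D x)^2 := by
    have h5 : ∀ y : V, I y * D y = ((n:ℚ)-1) * D y - (D y)^2 := by
      intro y; rw [hIO y]; ring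
    rw [Finset.sum_congr rfl fun y _ => h5 y, Finset.sum_sub_distrib,
      ← Finset.mul_sum]
  rw [hcard]
  set S1 : ℚ := ∑ x, D x with hS1def
  set S2 : ℚ := ∑ x, (D x)^2 with hS2def
  have hA' : C = ((n:ℚ) - 1) * S1 - S2 - T2 := by
    rw [← hID]; linarith [hA]
  have hT2v : T2 = (S2 - S1) / 2 := by linarith [hB]
  have hS2b : 4 * S2 - 4*((n:ℚ)-1)*S1 + (n:ℚ)*((n:ℚ)-1)^2 ≤ (n:ℚ) * (T.irreg : ℚ)^2 := by
    rw [← hexp]; exact hEsum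
  nlinarith [hA', hT2v, hS1v, hS2b]
end

section
/- Let T_n be a tournament of order n and irregularity i(T_n), let v be a vertex of T_n, let W = N^+(v) be the set of out-neighbors of v and U = N^-(v) the set of in-neighbors of v, and let A(W,U) denote the set of arcs from W to U. Then |A(W,U)| ≥ d^+(v)·(n − d^+(v) − i(T_n))/2. -/
open Finset

lemma card_filter_pair {V : Type} [Fintype V] (F : V → V → Prop) [∀ a b, Decidable (F a b)] :
    ((univ : Finset (V × V)).filter fun p => F p.1 p.2).card
      = ∑ w : V, (univ.filter fun u => F w u).card := by
  rw [← Finset.univ_product_univ, Finset.card_filter, Finset.sum_product]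
  exact Finset.sum_congr rfl fun w _ => (Finset.card_filter _ _).symm

lemma Tournament.noboth {V : Type} (T : Tournament V) (a b : V)
    (h1 : T.arc a b) (h2 : T.arc b a) : False := by
  by_cases hab : a = b
  · subst hab; simp [T.irrefl a] at h1
  · have := T.oneArc a b hab; rw [this] at h1; simp [h2] at h1

lemma Tournament.oneof {V : Type} (T : Tournament V) (a b : V) (hab : a ≠ b) :
    T.arc a b ∨ T.arc b a := by
  have h := T.oneArc a b hab
  cases hba : T.arc b a
  · left; rw [h, hba]; rfl
  · right; rfl

/-- Inequality (1): In a tournament of order `n`, for any vertex `v`,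
the number of arcs from `N⁺(v)` to `N⁻(v)` is at least `d⁺(v)(n − d⁺(v) − i(T))/2`. -/
theorem arcs_out_to_in_lower_bound
    {V : Type} [Fintype V] (n : ℕ) (hn : Fintype.card V = n)
    (T : Tournament V) (v : V) :
    (((univ : Finset (V × V)).filter fun p =>
        T.arc v p.1 ∧ T.arc p.2 v ∧ T.arc p.1 p.2).card : ℚ) ≥
      (T.outDeg v : ℚ) * ((n : ℚ) - (T.outDeg v : ℚ) - (T.irreg : ℚ)) / 2 := by
  classical
  set W : Finset V := univ.filter (fun w => T.arc v w) with hW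
  have hWcard : W.card = T.outDeg v := rfl
  -- every vertex has out + in degree n - 1
  have hdeg : ∀ w : V, T.outDeg w + T.inDeg w + 1 = n := by
    intro w
    have hun : (univ.filter fun u => T.arc w u) ∪ (univ.filter fun u => T.arc u w)
        = univ.erase w := by
      ext u
      simp only [Finset.mem_union, Finset.mem_filter, Finset.mem_univ, true_and,
        Finset.mem_erase, and_true]
      constructor
      · rintro (h | h)
        · rintro rfl; simp [T.irrefl] at h
        · rintro rfl; simp [T.irrefl] at h
      · intro hne
        exact T.oneof w u (fun e => hne e.symm)
    have hdisj : Disjoint (univ.filter fun u => T.arc w u) (univ.filter fun u => T.arc u w) := by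
      rw [Finset.disjoint_left]
      intro u h1 h2
      simp only [Finset.mem_filter, Finset.mem_univ, true_and] at h1 h2
      exact T.noboth w u h1 h2
    have h1 : T.outDeg w + T.inDeg w = (univ.erase w).card := by
      rw [← hun, Finset.card_union_of_disjoint hdisj]; rfl
    have h2 : (univ.erase w).card = n - 1 := by
      rw [Finset.card_erase_of_mem (Finset.mem_univ w), Finset.card_univ, hn]
    have hpos : 1 ≤ n := by
      rw [← hn]; exact Fintype.card_pos_iff.mpr ⟨v⟩
    omega
  -- irregularity bound
  have hirr : ∀ w : V, (T.inDeg w : ℤ) - (T.outDeg w : ℤ) ≤ (T.irreg : ℤ) := by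
    intro w
    have h1 : ((T.outDeg w : ℤ) - (T.inDeg w : ℤ)).natAbs ≤ T.irreg :=
      Finset.le_sup (f := fun u => ((T.outDeg u : ℤ) - (T.inDeg u : ℤ)).natAbs)
        (Finset.mem_univ w)
    omega
  -- degree lower bound in ℚ
  have hdegQ : ∀ w : V, (n : ℚ) - 1 - (T.irreg : ℚ) ≤ 2 * (T.outDeg w : ℚ) := by
    intro w
    have h1 := hdeg w
    have h2 := hirr w
    have h3 : (n : ℤ) - 1 - (T.irreg : ℤ) ≤ 2 * (T.outDeg w : ℤ) := by omega
    exact_mod_cast h3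
  -- the splitting of each out-neighbourhood
  have hA : ∀ w ∈ W,
      (univ.filter fun u => T.arc u v ∧ T.arc w u).card
        + (univ.filter fun u => T.arc v u ∧ T.arc w u).card = T.outDeg w := by
    intro w hw
    have hvw : T.arc v w := (Finset.mem_filter.mp hw).2
    have hwv : ¬ (T.arc w v : Prop) := fun h => T.noboth v w hvw h
    have hdisj : Disjoint (univ.filter fun u => T.arc u v ∧ T.arc w u)
        (univ.filter fun u => T.arc v u ∧ T.arc w u) := by
      rw [Finset.disjoint_left]
      intro u h1 h2
      simp only [Finset.mem_filter, Finset.mem_univ, true_and] at h1 h2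
      exact T.noboth u v h1.1 h2.1
    rw [← Finset.card_union_of_disjoint hdisj]
    congr 1
    ext u
    simp only [Finset.mem_union, Finset.mem_filter, Finset.mem_univ, true_and]
    constructor
    · rintro (⟨_, h⟩ | ⟨_, h⟩) <;> exact h
    · intro h
      have huv : u ≠ v := by rintro rfl; exact hwv h
      rcases T.oneof u v huv with h1 | h1
      · left; exact ⟨h1, h⟩
      · right; exact ⟨h1, h⟩
  -- the main count: LHS as a sum over W
  have hS : ((univ : Finset (V × V)).filter fun p =>
        T.arc v p.1 ∧ T.arc p.2 v ∧ T.arc p.1 p.2).card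
      = ∑ w ∈ W, (univ.filter fun u => T.arc u v ∧ T.arc w u).card := by
    rw [card_filter_pair (fun a b => T.arc v a ∧ T.arc b v ∧ T.arc a b)]
    have h : ∀ w : V, (univ.filter fun u => T.arc v w ∧ T.arc u v ∧ T.arc w u).card
        = if T.arc v w then (univ.filter fun u => T.arc u v ∧ T.arc w u).card else 0 := by
      intro w; by_cases h : (T.arc v w : Prop) <;> simp [h]
    simp_rw [h]
    rw [hW, Finset.sum_filter]
  -- within-W arcs sum as a pair count
  set P : Finset (V × V) := univ.filter fun p => T.arc v p.1 ∧ T.arc v p.2 ∧ T.arc p.1 p.2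
    with hP
  have hSB : ∑ w ∈ W, (univ.filter fun u => T.arc v u ∧ T.arc w u).card = P.card := by
    rw [hP, card_filter_pair (fun a b => T.arc v a ∧ T.arc v b ∧ T.arc a b)]
    have h : ∀ w : V, (univ.filter fun u => T.arc v w ∧ T.arc v u ∧ T.arc w u).card
        = if T.arc v w then (univ.filter fun u => T.arc v u ∧ T.arc w u).card else 0 := by
      intro w; by_cases h : (T.arc v w : Prop) <;> simp [h]
    simp_rw [h]
    rw [hW, Finset.sum_filter]
  -- the reversed pair set
  set Q : Finset (V × V) := univ.filter fun p => T.arc v p.1 ∧ T.arc v p.2 ∧ T.arc p.2 p.1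
    with hQdef
  have hQ : Q = P.image Prod.swap := by
    ext p
    simp only [hQdef, hP, Finset.mem_image, Finset.mem_filter, Finset.mem_univ, true_and,
      Prod.exists]
    constructor
    · rintro ⟨h1, h2, h3⟩; exact ⟨p.2, p.1, ⟨h2, h1, h3⟩, rfl⟩
    · rintro ⟨a, b, ⟨h1, h2, h3⟩, rfl⟩; exact ⟨h2, h1, h3⟩
  have hPQcard : Q.card = P.card := by
    rw [hQ]; exact Finset.card_image_of_injective _ Prod.swap_injective
  have hdisjPQ : Disjoint P Q := by
    rw [Finset.disjoint_left]
    intro p h1 h2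
    simp only [hP, hQdef, Finset.mem_filter, Finset.mem_univ, true_and] at h1 h2
    exact T.noboth p.1 p.2 h1.2.2 h2.2.2
  have hunion : P ∪ Q = W.offDiag := by
    ext p
    simp only [hP, hQdef, Finset.mem_union, Finset.mem_filter, Finset.mem_univ, true_and,
      Finset.mem_offDiag, hW]
    constructor
    · rintro (⟨h1, h2, h3⟩ | ⟨h1, h2, h3⟩)
      · refine ⟨h1, h2, fun e => ?_⟩
        rw [e] at h3; simp [T.irrefl] at h3
      · refine ⟨h1, h2, fun e => ?_⟩
        rw [e] at h3; simp [T.irrefl] at h3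
    · rintro ⟨h1, h2, hne⟩
      rcases T.oneof p.1 p.2 hne with h3 | h3
      · left; exact ⟨h1, h2, h3⟩
      · right; exact ⟨h1, h2, h3⟩
  have hle : W.card ≤ W.card * W.card := by
    rcases Nat.eq_zero_or_pos W.card with h | h
    · simp [h]
    · exact Nat.le_mul_of_pos_left _ h
  have hPcard : P.card + P.card = W.card * W.card - W.card := by
    have h := Finset.card_union_of_disjoint hdisjPQ
    rw [hunion, Finset.offDiag_card, hPQcard] at h
    exact h.symm
  -- cast everything to ℚ and finish
  have hPcardQ : (P.card : ℚ) + (P.card : ℚ) = (W.card : ℚ) * (W.card : ℚ) - (W.card : ℚ) := by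
    have := hPcard
    push_cast [Nat.cast_sub hle] at *
    exact_mod_cast this
  have hSQ : (((univ : Finset (V × V)).filter fun p =>
        T.arc v p.1 ∧ T.arc p.2 v ∧ T.arc p.1 p.2).card : ℚ)
      = (∑ w ∈ W, (T.outDeg w : ℚ)) - (P.card : ℚ) := by
    rw [hS, ← hSB]
    push_cast
    rw [← Finset.sum_sub_distrib]
    apply Finset.sum_congr rfl
    intro w hw
    have := hA w hw
    have h2 : ((univ.filter fun u => T.arc u v ∧ T.arc w u).card : ℚ)
        + ((univ.filter fun u => T.arc v u ∧ T.arc w u).card : ℚ) = (T.outDeg w : ℚ) := by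
      exact_mod_cast this
    linarith
  have hsum : (W.card : ℚ) * ((n : ℚ) - 1 - (T.irreg : ℚ)) ≤ ∑ w ∈ W, 2 * (T.outDeg w : ℚ) := by
    calc (W.card : ℚ) * ((n : ℚ) - 1 - (T.irreg : ℚ))
        = ∑ _w ∈ W, ((n : ℚ) - 1 - (T.irreg : ℚ)) := by
          rw [Finset.sum_const, nsmul_eq_mul]
      _ ≤ ∑ w ∈ W, 2 * (T.outDeg w : ℚ) := Finset.sum_le_sum fun w _ => hdegQ w
  rw [ge_iff_le, hSQ]
  have hd : (W.card : ℚ) = (T.outDeg v : ℚ) := by exact_mod_cast hWcard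
  rw [hd] at hPcardQ hsum
  have hsum2 : (T.outDeg v : ℚ) * ((n : ℚ) - 1 - (T.irreg : ℚ))
      ≤ 2 * ∑ w ∈ W, (T.outDeg w : ℚ) := by
    calc (T.outDeg v : ℚ) * ((n : ℚ) - 1 - (T.irreg : ℚ))
        ≤ ∑ w ∈ W, 2 * (T.outDeg w : ℚ) := hsum
      _ = 2 * ∑ w ∈ W, (T.outDeg w : ℚ) := (Finset.mul_sum _ _ _).symm
  linarith
end

section
/- Let n be an odd positive integer and let i be a nonnegative real number. If d_1, …, d_n are real numbers satisfying (n−1−i)/2 ≤ d_j ≤ (n−1+i)/2 for all j and Σ_{j=1}^n d_j = n(n−1)/2, then Σ_{j=1}^n d_j² ≤ (n−1)·[(n−1)² + i² + (n−1)]/4. -/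
open Finset

/-- the extremal bound on the sum of squares for odd `n`. -/
theorem sum_sq_upper_bound_odd (n : ℕ) (hodd : Odd n) (hpos : 0 < n)
    (i : ℝ) (hi : 0 ≤ i) (d : Fin n → ℝ)
    (hlb : ∀ j, ((n : ℝ) - 1 - i) / 2 ≤ d j)
    (hub : ∀ j, d j ≤ ((n : ℝ) - 1 + i) / 2)
    (hsum : ∑ j, d j = (n : ℝ) * ((n : ℝ) - 1) / 2) :
    ∑ j, (d j) ^ 2 ≤
      ((n : ℝ) - 1) * (((n : ℝ) - 1) ^ 2 + i ^ 2 + ((n : ℝ) - 1)) / 4 := by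
  obtain ⟨k, hk⟩ := hodd
  set m : ℝ := ((n : ℝ) - 1) / 2 with hm
  have hub' : ∀ j, d j - m ≤ i / 2 := by
    intro j; have := hub j; simp only [hm]; linarith
  have hlb' : ∀ j, -(i / 2) ≤ d j - m := by
    intro j; have := hlb j; simp only [hm]; linarith
  have hsume : ∑ j, (d j - m) = 0 := by
    rw [Finset.sum_sub_distrib, hsum, Finset.sum_const, Finset.card_univ,
      Fintype.card_fin, nsmul_eq_mul, hm]
    ring
  set P : Finset (Fin n) := univ.filter (fun j => 0 < d j - m) with hP
  set S : ℝ := ∑ j ∈ P, (d j - m) with hS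
  have hsplit := Finset.sum_filter_add_sum_filter_not univ
    (fun j => 0 < d j - m) (fun j => d j - m)
  rw [hsume] at hsplit
  have hSneg : ∑ j ∈ univ.filter (fun j => ¬ 0 < d j - m), (m - d j) = S := by
    have : ∑ j ∈ univ.filter (fun j => ¬ 0 < d j - m), (m - d j)
        = -∑ j ∈ univ.filter (fun j => ¬ 0 < d j - m), (d j - m) := by
      rw [← Finset.sum_neg_distrib]; apply Finset.sum_congr rfl; intros; ring
    rw [this]; rw [hS, hP]; linarith
  have hcard : P.card + (univ.filter (fun j => ¬ 0 < d j - m)).card = n := by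
    rw [hP, Finset.card_filter_add_card_filter_not, Finset.card_univ,
      Fintype.card_fin]
  have h1 : S ≤ (P.card : ℝ) * (i / 2) := by
    rw [hS]
    calc ∑ j ∈ P, (d j - m) ≤ ∑ _j ∈ P, (i / 2) :=
          Finset.sum_le_sum fun j _ => hub' j
      _ = (P.card : ℝ) * (i / 2) := by rw [Finset.sum_const, nsmul_eq_mul]
  have h2 : S ≤ ((univ.filter (fun j => ¬ 0 < d j - m)).card : ℝ) * (i / 2) := by
    rw [← hSneg]
    calc ∑ j ∈ univ.filter (fun j => ¬ 0 < d j - m), (m - d j)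
        ≤ ∑ _j ∈ univ.filter (fun j => ¬ 0 < d j - m), (i / 2) :=
          Finset.sum_le_sum fun j _ => by have := hlb' j; linarith
      _ = _ := by rw [Finset.sum_const, nsmul_eq_mul]
  have hSk : S ≤ (k : ℝ) * (i / 2) := by
    rcases le_or_gt P.card k with h | h
    · calc S ≤ (P.card : ℝ) * (i / 2) := h1
        _ ≤ (k : ℝ) * (i / 2) := by
            apply mul_le_mul_of_nonneg_right _ (by linarith)
            exact_mod_cast h
    · have : (univ.filter (fun j => ¬ 0 < d j - m)).card ≤ k := by omega
      calc S ≤ _ := h2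
        _ ≤ (k : ℝ) * (i / 2) := by
            apply mul_le_mul_of_nonneg_right _ (by linarith)
            exact_mod_cast this
  have habs : ∑ j, |d j - m| = 2 * S := by
    rw [← Finset.sum_filter_add_sum_filter_not univ (fun j => 0 < d j - m)
      (fun j => |d j - m|)]
    have e1 : ∑ j ∈ P, |d j - m| = S := by
      rw [hS]; apply Finset.sum_congr rfl
      intro j hj
      rw [hP, Finset.mem_filter] at hj
      exact abs_of_pos hj.2
    have e2 : ∑ j ∈ univ.filter (fun j => ¬ 0 < d j - m), |d j - m| = S := by
      rw [← hSneg]; apply Finset.sum_congr rfl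
      intro j hj
      rw [Finset.mem_filter] at hj
      have : d j - m ≤ 0 := by push_neg at hj; exact hj.2
      rw [abs_of_nonpos this]; ring
    rw [e1, e2]; ring
  have hsq : ∑ j, (d j - m) ^ 2 ≤ (i / 2) * ∑ j, |d j - m| := by
    rw [Finset.mul_sum]
    apply Finset.sum_le_sum
    intro j _
    have h3 : |d j - m| ≤ i / 2 := abs_le.mpr ⟨hlb' j, hub' j⟩
    calc (d j - m) ^ 2 = |d j - m| * |d j - m| := by
          rw [← abs_mul, ← sq, abs_sq]
      _ ≤ (i / 2) * |d j - m| :=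
          mul_le_mul_of_nonneg_right h3 (abs_nonneg _)
  have hexp : ∑ j, (d j) ^ 2
      = ∑ j, (d j - m) ^ 2 + 2 * m * (∑ j, d j) - n * m ^ 2 := by
    have : ∑ j, (d j - m) ^ 2 = ∑ j, ((d j) ^ 2 - 2 * m * d j + m ^ 2) := by
      apply Finset.sum_congr rfl; intros; ring
    rw [this, Finset.sum_add_distrib, Finset.sum_sub_distrib, ← Finset.mul_sum,
      Finset.sum_const, Finset.card_univ, Fintype.card_fin, nsmul_eq_mul]
    ring
  have hn : (n : ℝ) = 2 * (k : ℝ) + 1 := by exact_mod_cast congrArg (Nat.cast : ℕ → ℝ) hk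
  have hfin : ∑ j, (d j - m) ^ 2 ≤ ((n : ℝ) - 1) * i ^ 2 / 4 := by
    have := mul_le_mul_of_nonneg_left hSk (by linarith : (0:ℝ) ≤ 2 * (i / 2))
    calc ∑ j, (d j - m) ^ 2 ≤ (i / 2) * (2 * S) := by rw [← habs]; exact hsq
      _ ≤ (i / 2) * (2 * ((k : ℝ) * (i / 2))) := by nlinarith
      _ = ((n : ℝ) - 1) * i ^ 2 / 4 := by rw [hn]; ring
  rw [hexp, hsum, hm]
  have : ((n:ℝ) - 1) * (((n:ℝ) - 1) ^ 2 + i ^ 2 + ((n:ℝ) - 1)) / 4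
      = ((n:ℝ) - 1) * i ^ 2 / 4 + 2 * (((n:ℝ)-1)/2) * ((n:ℝ) * ((n:ℝ)-1)/2)
        - (n:ℝ) * (((n:ℝ)-1)/2) ^ 2 := by ring
  rw [this]
  linarith [hfin]
end
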